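/- Let D ∈ ℝ^{m×n} be a matrix of rank r with skinny singular value decomposition D = U_r Σ_r V_rᵀ, where U_rᵀU_r = I_r, V_rᵀV_r = I_r, and Σ_r is diagonal with diagonal entries σ₁ ≥ σ₂ ≥ ⋯ ≥ σ_r > 0. Let C* = V_r V_rᵀ be the (unique) nuclear-norm minimal solution of D = D C, whose skinny SVD is C* = U_C Σ_C V_Cᵀ with U_C = V_C = V_r and Σ_C = I_r. Let α > 0 and let k* be a minimizer over k ∈ {0, 1, …, r} of the function k ↦ k + (α/2)·∑_{i>k} σᵢ². Define C₀* = U_C H_{k*}(Σ_C) V_Cᵀ = V_{k*} V_{k*}ᵀ, where H_{k*} retains the first k* diagonal entries of Σ_C and sets the others to zero, and V_{k*} consists of the first k* columns of V_r. Then there exists D₀* ∈ ℝ^{m×n} such that D₀* = D₀* C₀* and, for every pair (C₀, D₀) with D₀ = D₀ C₀, it holds that ‖C₀*‖_* + (α/2)·‖D − D₀*‖_F² ≤ ‖C₀‖_* + (α/2)·‖D − D₀‖_F². That is, C₀* is the C₀-component of an optimal solution of: minimize ‖C₀‖_* + (α/2)·‖D_e‖_F² subject to D₀ = D₀ C₀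 and D = D₀ + D_e. -/

import Mathlib

open Matrix BigOperators

/-- The nuclear norm of a real matrix: the sum of its singular values, i.e. the sum of the
square roots of the eigenvalues of the positive semidefinite matrix `CᴴC = CᵀC`. -/
noncomputable def nuclearNorm {k l : ℕ} (C : Matrix (Fin k) (Fin l) ℝ) : ℝ :=
  ∑ i, Real.sqrt ((Matrix.isHermitian_conjTranspose_mul_self C).eigenvalues i)

/-- The Frobenius norm of a real matrix. -/
noncomputable def frobNorm {k l : ℕ} (A : Matrix (Fin k) (Fin l) ℝ) : ℝ :=
  Real.sqrt (∑ i, ∑ j, (A i j) ^ 2)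

/-- The submatrix consisting of the first `k` columns of `A`. -/
def firstCols {m n k : ℕ} (h : k ≤ n) (A : Matrix (Fin m) (Fin n) ℝ) :
    Matrix (Fin m) (Fin k) ℝ :=
  A.submatrix id (Fin.castLE h)

/-! ### Auxiliary lemmas -/

lemma exists_orthonormal_cols {N t : ℕ} (K : Submodule ℝ (Fin N → ℝ))
    (h : t ≤ Module.finrank ℝ K) :
    ∃ X : Matrix (Fin N) (Fin t) ℝ, Xᵀ * X = 1 ∧ ∀ j, (fun i => X i j) ∈ K := by
  let e : (Fin N → ℝ) ≃ₗ[ℝ] EuclideanSpace ℝ (Fin N) := (WithLp.linearEquiv 2 ℝ (Fin N → ℝ)).symm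
  let K' : Submodule ℝ (EuclideanSpace ℝ (Fin N)) := K.map (e : (Fin N → ℝ) →ₗ[ℝ] EuclideanSpace ℝ (Fin N))
  have hfr : Module.finrank ℝ K' = Module.finrank ℝ K := by
    simpa [K'] using LinearEquiv.finrank_map_eq e K
  have ht : t ≤ Module.finrank ℝ K' := hfr ▸ h
  let b := stdOrthonormalBasis ℝ K'
  refine ⟨fun i j => ((b ⟨j, lt_of_lt_of_le j.2 ht⟩ : K') : EuclideanSpace ℝ (Fin N)) i, ?_, ?_⟩
  · ext a c
    have := b.orthonormal
    rw [orthonormal_iff_ite] at this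
    have h2 := this ⟨a, lt_of_lt_of_le a.2 ht⟩ ⟨c, lt_of_lt_of_le c.2 ht⟩
    rw [Submodule.coe_inner, PiLp.inner_apply] at h2
    simp only [RCLike.inner_apply, starRingEnd_apply, star_trivial] at h2 ⊢
    show (∑ x : Fin N, ((b ⟨a, _⟩ : K') : EuclideanSpace ℝ (Fin N)) x *
      ((b ⟨c, _⟩ : K') : EuclideanSpace ℝ (Fin N)) x) = (1 : Matrix (Fin t) (Fin t) ℝ) a c
    simp only [Matrix.one_apply, Fin.ext_iff] at h2 ⊢
    rw [← h2]
    exact Finset.sum_congr rfl fun x _ => mul_comm _ _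
  · intro j
    have hm : ((b ⟨j, lt_of_lt_of_le j.2 ht⟩ : K') : EuclideanSpace ℝ (Fin N)) ∈ K' :=
      (b ⟨j, lt_of_lt_of_le j.2 ht⟩).2
    rcases Submodule.mem_map.mp hm with ⟨y, hy, hye⟩
    have : y = fun i => ((b ⟨j, lt_of_lt_of_le j.2 ht⟩ : K') : EuclideanSpace ℝ (Fin N)) i := by
      funext i; exact congrFun (congrArg (fun z => (WithLp.equiv 2 _) z) hye) i
    exact this ▸ hy

lemma conj_diag {n m : ℕ} (U : Matrix (Fin n) (Fin m) ℝ) (M : Matrix (Fin n) (Fin n) ℝ)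
    (i : Fin m) :
    (Uᵀ * M * U) i i = (fun a => U a i) ⬝ᵥ (M *ᵥ (fun a => U a i)) := by
  simp only [Matrix.mul_apply, Matrix.transpose_apply, Matrix.mulVec, dotProduct,
    Finset.sum_mul, Finset.mul_sum]
  rw [Finset.sum_comm]
  refine Finset.sum_congr rfl fun a _ => Finset.sum_congr rfl fun b _ => by ring

lemma dot_mulVec_eq {n : ℕ} (P C : Matrix (Fin n) (Fin n) ℝ) (u : Fin n → ℝ) :
    u ⬝ᵥ ((Pᵀ * C) *ᵥ u) = (P *ᵥ u) ⬝ᵥ (C *ᵥ u) := by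
  rw [Matrix.dotProduct_mulVec u (Pᵀ * C) u, ← Matrix.vecMul_vecMul,
    ← Matrix.dotProduct_mulVec, Matrix.vecMul_transpose]

lemma dot_self_nonneg' {n : ℕ} (v : Fin n → ℝ) : (0:ℝ) ≤ v ⬝ᵥ v :=
  Finset.sum_nonneg fun a _ => mul_self_nonneg _

lemma trace_proj_le_nuclearNorm {n : ℕ} (C P : Matrix (Fin n) (Fin n) ℝ)
    (hPsymm : Pᵀ = P) (hPP : P * P = P) :
    Matrix.trace (P * C) ≤ nuclearNorm C := by
  set A := Cᵀ * C with hAdef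
  have hA : A.IsHermitian := Matrix.isHermitian_conjTranspose_mul_self C
  set U : Matrix (Fin n) (Fin n) ℝ := (hA.eigenvectorUnitary : Matrix (Fin n) (Fin n) ℝ) with hUdef
  have hsU : star U = Uᵀ := by rw [Matrix.star_eq_conjTranspose]; rfl
  have hUU : Uᵀ * U = 1 := by
    rw [← hsU]; exact (Matrix.mem_unitaryGroup_iff').mp (Matrix.IsHermitian.eigenvectorUnitary hA).2
  have hUU' : U * Uᵀ = 1 := by
    rw [← hsU]; exact (Matrix.mem_unitaryGroup_iff).mp (Matrix.IsHermitian.eigenvectorUnitary hA).2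
  have hdiag : Uᵀ * A * U = Matrix.diagonal hA.eigenvalues := by
    rw [← hsU]
    simpa using (by simpa [Unitary.conjStarAlgAut_star_apply] using hA.conjStarAlgAut_star_eigenvectorUnitary)
  have htr : Matrix.trace (P * C) = ∑ i, (Uᵀ * (P * C) * U) i i := by
    have : Matrix.trace (Uᵀ * (P * C) * U) = Matrix.trace (P * C) := by
      rw [Matrix.trace_mul_cycle, ← Matrix.mul_assoc, hUU', Matrix.one_mul]
    rw [← this]; rfl
  rw [htr]
  apply Finset.sum_le_sum
  intro i _
  set u : Fin n → ℝ := fun a => U a i with hu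
  have hterm : (Uᵀ * (P * C) * U) i i = (P *ᵥ u) ⬝ᵥ (C *ᵥ u) := by
    rw [conj_diag, ← dot_mulVec_eq P C u, hPsymm]
  have huu : u ⬝ᵥ u = 1 := by
    have h1 : (Uᵀ * U) i i = 1 := by rw [hUU]; simp
    have h2 : (Uᵀ * U) i i = u ⬝ᵥ u := by
      simp [Matrix.mul_apply, dotProduct, hu]
    rw [h2] at h1; exact h1
  have hcc : (C *ᵥ u) ⬝ᵥ (C *ᵥ u) = hA.eigenvalues i := by
    have h1 : (Uᵀ * A * U) i i = hA.eigenvalues i := by rw [hdiag]; simp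
    rw [conj_diag] at h1
    have h2 : u ⬝ᵥ ((Cᵀ * C) *ᵥ u) = hA.eigenvalues i := h1
    rw [dot_mulVec_eq C C u] at h2
    exact h2
  have hppnn : (0:ℝ) ≤ (P *ᵥ u) ⬝ᵥ (P *ᵥ u) := dot_self_nonneg' _
  have hpu : (P *ᵥ u) ⬝ᵥ (P *ᵥ u) = u ⬝ᵥ (P *ᵥ u) := by
    rw [← dot_mulVec_eq P P u, hPsymm, hPP]
  have hCS : ∀ (v w : Fin n → ℝ), (v ⬝ᵥ w) ^ 2 ≤ (v ⬝ᵥ v) * (w ⬝ᵥ w) := by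
    intro v w
    have := Finset.sum_mul_sq_le_sq_mul_sq Finset.univ v w
    simpa [dotProduct, sq] using this
  have hpp1 : (P *ᵥ u) ⬝ᵥ (P *ᵥ u) ≤ 1 := by
    have h2 : ((P *ᵥ u) ⬝ᵥ (P *ᵥ u)) ^ 2 ≤ (P *ᵥ u) ⬝ᵥ (P *ᵥ u) := by
      calc ((P *ᵥ u) ⬝ᵥ (P *ᵥ u)) ^ 2 = (u ⬝ᵥ (P *ᵥ u)) ^ 2 := by rw [hpu]
        _ ≤ (u ⬝ᵥ u) * ((P *ᵥ u) ⬝ᵥ (P *ᵥ u)) := hCS u (P *ᵥ u)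
        _ = (P *ᵥ u) ⬝ᵥ (P *ᵥ u) := by rw [huu, one_mul]
    nlinarith [hppnn]
  have hfinal : (P *ᵥ u) ⬝ᵥ (C *ᵥ u) ≤ Real.sqrt (hA.eigenvalues i) := by
    have h1 : ((P *ᵥ u) ⬝ᵥ (C *ᵥ u)) ^ 2 ≤ hA.eigenvalues i := by
      calc ((P *ᵥ u) ⬝ᵥ (C *ᵥ u)) ^ 2 ≤ ((P *ᵥ u) ⬝ᵥ (P *ᵥ u)) * ((C *ᵥ u) ⬝ᵥ (C *ᵥ u)) :=
            hCS _ _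
        _ ≤ 1 * ((C *ᵥ u) ⬝ᵥ (C *ᵥ u)) :=
            mul_le_mul_of_nonneg_right hpp1 (dot_self_nonneg' _)
        _ = hA.eigenvalues i := by rw [one_mul, hcc]
    calc (P *ᵥ u) ⬝ᵥ (C *ᵥ u) ≤ |((P *ᵥ u) ⬝ᵥ (C *ᵥ u))| := le_abs_self _
      _ = Real.sqrt (((P *ᵥ u) ⬝ᵥ (C *ᵥ u)) ^ 2) := (Real.sqrt_sq_eq_abs _).symm
      _ ≤ Real.sqrt (hA.eigenvalues i) := Real.sqrt_le_sqrt h1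
  rw [hterm]
  exact hfinal

lemma nuclearNorm_proj {n : ℕ} (Q : Matrix (Fin n) (Fin n) ℝ)
    (hsymm : Qᵀ = Q) (hidem : Q * Q = Q) :
    nuclearNorm Q = Matrix.trace Q := by
  have hA : (Qᵀ * Q).IsHermitian := Matrix.isHermitian_conjTranspose_mul_self Q
  have hAQ : Qᵀ * Q = Q := by rw [hsymm, hidem]
  set U : Matrix (Fin n) (Fin n) ℝ := (hA.eigenvectorUnitary : Matrix (Fin n) (Fin n) ℝ) with hUdef
  have hsU : star U = Uᵀ := by rw [Matrix.star_eq_conjTranspose]; rfl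
  have hUU : Uᵀ * U = 1 := by
    rw [← hsU]; exact (Matrix.mem_unitaryGroup_iff').mp (Matrix.IsHermitian.eigenvectorUnitary hA).2
  have hUU' : U * Uᵀ = 1 := by
    rw [← hsU]; exact (Matrix.mem_unitaryGroup_iff).mp (Matrix.IsHermitian.eigenvectorUnitary hA).2
  have hdiag : Uᵀ * (Qᵀ * Q) * U = Matrix.diagonal hA.eigenvalues := by
    rw [← hsU]; simpa using (by simpa [Unitary.conjStarAlgAut_star_apply] using hA.conjStarAlgAut_star_eigenvectorUnitary)
  have hDD : Matrix.diagonal hA.eigenvalues * Matrix.diagonal hA.eigenvalues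
      = Matrix.diagonal hA.eigenvalues := by
    rw [← hdiag]
    have e1 : Uᵀ * (Qᵀ * Q) * U * (Uᵀ * (Qᵀ * Q) * U)
        = Uᵀ * ((Qᵀ * Q) * ((U * Uᵀ) * ((Qᵀ * Q) * U))) := by
      simp only [Matrix.mul_assoc]
    rw [e1, hUU', Matrix.one_mul, hAQ]
    rw [show Q * (Q * U) = (Q * Q) * U by rw [Matrix.mul_assoc], hidem, Matrix.mul_assoc]
  have heig : ∀ i, hA.eigenvalues i = 0 ∨ hA.eigenvalues i = 1 := by
    intro i
    have h2 := Matrix.ext_iff.mpr hDD i i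
    simp only [Matrix.diagonal_mul_diagonal, Matrix.diagonal_apply_eq] at h2
    have h3 : hA.eigenvalues i * (hA.eigenvalues i - 1) = 0 := by ring_nf; linarith [h2]
    rcases mul_eq_zero.mp h3 with h | h
    · exact Or.inl h
    · exact Or.inr (by linarith)
  have hsum : nuclearNorm Q = ∑ i, hA.eigenvalues i := by
    unfold nuclearNorm
    apply Finset.sum_congr rfl
    intro i _
    change Real.sqrt (hA.eigenvalues i) = _
    rcases heig i with h | h <;> rw [h] <;> simp
  rw [hsum]
  have htr : Matrix.trace (Matrix.diagonal hA.eigenvalues) = Matrix.trace Q := by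
    rw [← hdiag, Matrix.trace_mul_cycle, ← Matrix.mul_assoc, hUU', Matrix.one_mul, hAQ]
  rw [← Matrix.trace_diagonal, htr]

lemma tail_bound {r : ℕ} (σ : Fin r → ℝ) (hσnn : ∀ i, 0 ≤ σ i)
    (hσmono : ∀ i j : Fin r, i ≤ j → σ j ≤ σ i)
    (s' : ℕ) (hs' : s' ≤ r) (t : Fin r → ℝ)
    (ht0 : ∀ i, 0 ≤ t i) (ht1 : ∀ i, t i ≤ 1)
    (hsum : ∑ i, t i = (r : ℝ) - s') :
    ∑ i : Fin r, (if s' ≤ (i : ℕ) then σ i ^ 2 else 0) ≤ ∑ i, σ i ^ 2 * t i := by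
  rcases eq_or_lt_of_le hs' with heq | hlt
  · have hL : ∑ i : Fin r, (if s' ≤ (i : ℕ) then σ i ^ 2 else 0) = 0 := by
      apply Finset.sum_eq_zero
      intro i _
      have hi := i.isLt
      rw [if_neg (by omega)]
    rw [hL]
    exact Finset.sum_nonneg fun i _ => mul_nonneg (sq_nonneg _) (ht0 i)
  · set p : Fin r := ⟨s', hlt⟩ with hp
    set S : Finset (Fin r) := Finset.Ici p with hS
    have hmem : ∀ i : Fin r, i ∈ S ↔ s' ≤ (i : ℕ) := by
      intro i; simp [hS, Fin.le_def, hp]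
    have hcard : (S.card : ℝ) = (r : ℝ) - s' := by
      rw [Fin.card_Ici p]
      push_cast [Nat.cast_sub hs']
      exact Nat.cast_sub hs'
    have hLHS : ∑ i : Fin r, (if s' ≤ (i : ℕ) then σ i ^ 2 else 0) = ∑ i ∈ S, σ i ^ 2 := by
      rw [← Finset.sum_filter]
      congr 1
      ext i
      simp [hmem i]
    set β : ℝ := σ p ^ 2 with hβ
    have h1 : ∑ i ∈ S, σ i ^ 2 * (1 - t i) ≤ ∑ i ∈ S, β * (1 - t i) := by
      apply Finset.sum_le_sum
      intro i hi
      have hpi : p ≤ i := by rw [Fin.le_def]; exact (hmem i).mp hi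
      have : σ i ^ 2 ≤ β := pow_le_pow_left₀ (hσnn i) (hσmono p i hpi) 2
      exact mul_le_mul_of_nonneg_right this (by linarith [ht1 i])
    have h2 : ∑ i ∈ Sᶜ, β * t i ≤ ∑ i ∈ Sᶜ, σ i ^ 2 * t i := by
      apply Finset.sum_le_sum
      intro i hi
      have hip : i ≤ p := by
        rw [Finset.mem_compl] at hi
        have hps : (p : ℕ) = s' := rfl
        rw [Fin.le_def, hps]
        have : ¬ s' ≤ (i : ℕ) := fun hc => hi ((hmem i).mpr hc)
        omega
      have : β ≤ σ i ^ 2 := pow_le_pow_left₀ (hσnn p) (hσmono i p hip) 2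
      exact mul_le_mul_of_nonneg_right this (ht0 i)
    have e1 : ∑ i ∈ S, σ i ^ 2 * (1 - t i) = ∑ i ∈ S, σ i ^ 2 - ∑ i ∈ S, σ i ^ 2 * t i := by
      rw [← Finset.sum_sub_distrib]
      exact Finset.sum_congr rfl fun i _ => by ring
    have e2 : ∑ i ∈ S, σ i ^ 2 * t i + ∑ i ∈ Sᶜ, σ i ^ 2 * t i = ∑ i, σ i ^ 2 * t i :=
      Finset.sum_add_sum_compl S _
    have e3 : ∑ i ∈ S, β * (1 - t i) = β * ((S.card : ℝ) - ∑ i ∈ S, t i) := by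
      calc ∑ i ∈ S, β * (1 - t i) = ∑ i ∈ S, (β - β * t i) :=
            Finset.sum_congr rfl fun i _ => by ring
        _ = S.card • β - ∑ i ∈ S, β * t i := by rw [Finset.sum_sub_distrib, Finset.sum_const]
        _ = β * ((S.card : ℝ) - ∑ i ∈ S, t i) := by
            rw [nsmul_eq_mul, mul_sub, Finset.mul_sum, mul_comm β]
    have e4 : ∑ i ∈ S, t i + ∑ i ∈ Sᶜ, t i = (r : ℝ) - s' := by
      rw [Finset.sum_add_sum_compl S t]; exact hsum
    have e5 : ∑ i ∈ Sᶜ, β * t i = β * ∑ i ∈ Sᶜ, t i := by rw [Finset.mul_sum]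
    rw [hLHS, ← e2]
    have : β * ((S.card : ℝ) - ∑ i ∈ S, t i) = β * ∑ i ∈ Sᶜ, t i := by
      rw [hcard]
      congr 1
      linarith [e4]
    linarith [h1, h2, e1, e3, e5, this]

lemma trace_transpose_mul_self_nonneg {a b : ℕ} (N : Matrix (Fin a) (Fin b) ℝ) :
    0 ≤ Matrix.trace (Nᵀ * N) := by
  rw [Matrix.trace]
  apply Finset.sum_nonneg
  intro i _
  simp only [Matrix.diag_apply, Matrix.mul_apply, Matrix.transpose_apply]
  exact Finset.sum_nonneg fun j _ => mul_self_nonneg _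

lemma trace_compress_le {a b c : ℕ} (M : Matrix (Fin a) (Fin b) ℝ) (X : Matrix (Fin b) (Fin c) ℝ)
    (hX : Xᵀ * X = 1) :
    Matrix.trace ((M * X)ᵀ * (M * X)) ≤ Matrix.trace (Mᵀ * M) := by
  set P := X * Xᵀ with hP
  have hPsymm : Pᵀ = P := by rw [hP, Matrix.transpose_mul, Matrix.transpose_transpose]
  have hPP : P * P = P := by
    rw [hP]
    calc X * Xᵀ * (X * Xᵀ) = X * (Xᵀ * X) * Xᵀ := by simp only [Matrix.mul_assoc]
      _ = X * Xᵀ := by rw [hX, Matrix.mul_one]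
  have hgoal : Matrix.trace ((M * X)ᵀ * (M * X)) = Matrix.trace (Mᵀ * M * P) := by
    rw [Matrix.transpose_mul]
    calc Matrix.trace (Xᵀ * Mᵀ * (M * X)) = Matrix.trace (M * X * (Xᵀ * Mᵀ)) := by
          rw [Matrix.trace_mul_comm]
      _ = Matrix.trace (Mᵀ * M * P) := by
          rw [hP]
          rw [show M * X * (Xᵀ * Mᵀ) = M * (X * Xᵀ) * Mᵀ by simp only [Matrix.mul_assoc]]
          rw [Matrix.trace_mul_comm, Matrix.mul_assoc]
  have hexp : Matrix.trace ((M - M * P)ᵀ * (M - M * P))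
      = Matrix.trace (Mᵀ * M) - Matrix.trace (Mᵀ * M * P) := by
    rw [Matrix.transpose_sub, Matrix.sub_mul, Matrix.mul_sub, Matrix.mul_sub,
      Matrix.trace_sub, Matrix.trace_sub, Matrix.trace_sub]
    have e1 : Matrix.trace (Mᵀ * (M * P)) = Matrix.trace (Mᵀ * M * P) := by
      rw [Matrix.mul_assoc]
    have e2 : Matrix.trace ((M * P)ᵀ * M) = Matrix.trace (Mᵀ * M * P) := by
      rw [Matrix.transpose_mul, hPsymm, Matrix.mul_assoc, Matrix.trace_mul_comm,
        Matrix.mul_assoc]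
    have e3 : Matrix.trace ((M * P)ᵀ * (M * P)) = Matrix.trace (Mᵀ * M * P) := by
      rw [Matrix.transpose_mul, hPsymm]
      calc Matrix.trace (P * Mᵀ * (M * P)) = Matrix.trace (M * P * (P * Mᵀ)) := by
            rw [Matrix.trace_mul_comm]
        _ = Matrix.trace (M * (P * P) * Mᵀ) := by simp only [Matrix.mul_assoc]
        _ = Matrix.trace (Mᵀ * (M * P)) := by rw [hPP, Matrix.trace_mul_comm]
        _ = Matrix.trace (Mᵀ * M * P) := by rw [Matrix.mul_assoc]
    rw [e1, e2, e3]
    ring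
  have hNN := trace_transpose_mul_self_nonneg (M - M * P)
  rw [hexp] at hNN
  rw [hgoal]
  linarith

lemma frob_sq_eq_trace {a b : ℕ} (A : Matrix (Fin a) (Fin b) ℝ) :
    frobNorm A ^ 2 = Matrix.trace (Aᵀ * A) := by
  unfold frobNorm
  rw [Real.sq_sqrt (Finset.sum_nonneg fun i _ => Finset.sum_nonneg fun j _ => sq_nonneg (A i j))]
  rw [Matrix.trace, Finset.sum_comm]
  apply Finset.sum_congr rfl
  intro j _
  simp only [Matrix.diag_apply, Matrix.mul_apply, Matrix.transpose_apply, sq]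

lemma col_mul {a b c : ℕ} (A : Matrix (Fin a) (Fin b) ℝ) (B : Matrix (Fin b) (Fin c) ℝ)
    (j : Fin c) : (fun i => (A * B) i j) = A *ᵥ (fun l => B l j) := by
  funext i
  simp [Matrix.mul_apply, Matrix.mulVec, dotProduct]

/-- `nuclearNorm C₀ ≥ s'` whenever `D₀ = D₀ * C₀` and `s' ≤ rank D₀`. -/
lemma nuclearNorm_ge_rank {m n : ℕ} (D₀ : Matrix (Fin m) (Fin n) ℝ)
    (C₀ : Matrix (Fin n) (Fin n) ℝ) (hfeas : D₀ = D₀ * C₀)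
    (s' : ℕ) (hs' : s' ≤ D₀.rank) : (s' : ℝ) ≤ nuclearNorm C₀ := by
  set K : Submodule ℝ (Fin n → ℝ) := LinearMap.range (Matrix.mulVecLin D₀ᵀ) with hK
  have hfrK : Module.finrank ℝ K = D₀.rank := by
    rw [hK, ← Matrix.rank_transpose D₀, Matrix.rank]
  obtain ⟨X, hX1, hX2⟩ := exists_orthonormal_cols (t := s') K (by rw [hfrK]; exact hs')
  have hCfix : ∀ v ∈ K, C₀ᵀ *ᵥ v = v := by
    intro v hv
    rcases hv with ⟨y, hy⟩
    rw [← hy]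
    show C₀ᵀ *ᵥ (D₀ᵀ *ᵥ y) = D₀ᵀ *ᵥ y
    rw [Matrix.mulVec_mulVec, ← Matrix.transpose_mul, ← hfeas]
  have hCX : C₀ᵀ * X = X := by
    ext i j
    have hcol := hCfix _ (hX2 j)
    calc (C₀ᵀ * X) i j = (C₀ᵀ *ᵥ fun l => X l j) i := by
          simp [Matrix.mul_apply, Matrix.mulVec, dotProduct]
      _ = X i j := congrFun hcol i
  set P := X * Xᵀ with hP
  have hPsymm : Pᵀ = P := by rw [hP, Matrix.transpose_mul, Matrix.transpose_transpose]
  have hPP : P * P = P := by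
    rw [hP]
    calc X * Xᵀ * (X * Xᵀ) = X * (Xᵀ * X) * Xᵀ := by simp only [Matrix.mul_assoc]
      _ = X * Xᵀ := by rw [hX1, Matrix.mul_one]
  have hPC : P * C₀ = P := by
    have h1 : (P * C₀)ᵀ = P := by
      rw [Matrix.transpose_mul, hPsymm, hP, ← Matrix.mul_assoc, hCX]
    calc P * C₀ = ((P * C₀)ᵀ)ᵀ := by rw [Matrix.transpose_transpose]
      _ = Pᵀ := by rw [h1]
      _ = P := hPsymm
  have htrP : Matrix.trace P = (s' : ℝ) := by
    rw [hP, Matrix.trace_mul_comm, hX1, Matrix.trace_one]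
    simp
  have := trace_proj_le_nuclearNorm C₀ P hPsymm hPP
  rw [hPC, htrP] at this
  exact this


lemma trace_orth_left {a b c : ℕ} (Ur : Matrix (Fin a) (Fin b) ℝ) (Z : Matrix (Fin b) (Fin c) ℝ)
    (hU : Urᵀ * Ur = 1) :
    Matrix.trace ((Ur * Z)ᵀ * (Ur * Z)) = Matrix.trace (Zᵀ * Z) := by
  rw [Matrix.transpose_mul]
  rw [show Zᵀ * Urᵀ * (Ur * Z) = Zᵀ * ((Urᵀ * Ur) * Z) by simp only [Matrix.mul_assoc],
    hU, Matrix.one_mul]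

lemma trace_sq_diag {b c : ℕ} (σ : Fin b → ℝ) (Cm : Matrix (Fin b) (Fin c) ℝ) :
    Matrix.trace ((Matrix.diagonal σ * Cm)ᵀ * (Matrix.diagonal σ * Cm))
      = ∑ i, σ i ^ 2 * (∑ j, Cm i j ^ 2) := by
  rw [Matrix.trace]
  simp only [Matrix.diag_apply, Matrix.mul_apply, Matrix.transpose_apply,
    Matrix.diagonal_apply, ite_mul, zero_mul, Finset.sum_ite_eq, Finset.mem_univ, if_true]
  rw [Finset.sum_comm]
  refine Finset.sum_congr rfl fun i _ => ?_
  rw [Finset.mul_sum]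
  exact Finset.sum_congr rfl fun j _ => by ring

/-- The Frobenius-norm Eckart–Young-type lower bound. -/
lemma frob_ge_tail {m n r : ℕ} (D D₀ : Matrix (Fin m) (Fin n) ℝ)
    (Ur : Matrix (Fin m) (Fin r) ℝ) (Vr : Matrix (Fin n) (Fin r) ℝ)
    (σ : Fin r → ℝ) (hσnn : ∀ i, 0 ≤ σ i)
    (hσmono : ∀ i j : Fin r, i ≤ j → σ j ≤ σ i)
    (hU : Urᵀ * Ur = 1) (hV : Vrᵀ * Vr = 1)
    (hD : D = Ur * Matrix.diagonal σ * Vrᵀ)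
    (s' : ℕ) (hs'r : s' ≤ r) (hs'rank : (D₀ * Vr).rank ≤ s') :
    ∑ i : Fin r, (if s' ≤ (i : ℕ) then σ i ^ 2 else 0) ≤ frobNorm (D - D₀) ^ 2 := by
  -- kernel of D₀ * Vr
  have hfr : r - s' ≤ Module.finrank ℝ (LinearMap.ker (Matrix.mulVecLin (D₀ * Vr))) := by
    have h1 := LinearMap.finrank_range_add_finrank_ker (Matrix.mulVecLin (D₀ * Vr))
    have h2 : Module.finrank ℝ (Fin r → ℝ) = r := by simp
    have h3 : Module.finrank ℝ (LinearMap.range (Matrix.mulVecLin (D₀ * Vr)))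
        = (D₀ * Vr).rank := rfl
    rw [h2, h3] at h1
    omega
  obtain ⟨Cm, hCm1, hCm2⟩ :=
    exists_orthonormal_cols (t := r - s') (LinearMap.ker (Matrix.mulVecLin (D₀ * Vr))) hfr
  set X := Vr * Cm with hX
  have hXX : Xᵀ * X = 1 := by
    rw [hX, Matrix.transpose_mul]
    rw [show Cmᵀ * Vrᵀ * (Vr * Cm) = Cmᵀ * ((Vrᵀ * Vr) * Cm) by simp only [Matrix.mul_assoc],
      hV, Matrix.one_mul, hCm1]
  have hD₀X : D₀ * X = 0 := by
    ext i j
    have hker := hCm2 j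
    rw [LinearMap.mem_ker, Matrix.mulVecLin_apply] at hker
    have : (D₀ * X) i j = ((D₀ * Vr) *ᵥ fun l => Cm l j) i := by
      rw [hX, ← Matrix.mul_assoc]
      simp [Matrix.mul_apply, Matrix.mulVec, dotProduct]
    rw [this, hker]
    rfl
  have hMX : (D - D₀) * X = Ur * (Matrix.diagonal σ * Cm) := by
    rw [Matrix.sub_mul, hD₀X, sub_zero, hD, hX]
    rw [show Ur * Matrix.diagonal σ * Vrᵀ * (Vr * Cm)
        = Ur * (Matrix.diagonal σ * ((Vrᵀ * Vr) * Cm)) by simp only [Matrix.mul_assoc],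
      hV, Matrix.one_mul]
  -- the weights
  set t : Fin r → ℝ := fun i => ∑ j, Cm i j ^ 2 with ht
  have ht0 : ∀ i, 0 ≤ t i := fun i => Finset.sum_nonneg fun j _ => sq_nonneg _
  have htsum : ∑ i, t i = (r : ℝ) - s' := by
    have h1 : Matrix.trace (Cmᵀ * Cm) = ∑ i, t i := by
      show Matrix.trace (Cmᵀ * Cm) = ∑ i : Fin r, ∑ j, Cm i j ^ 2
      rw [Matrix.trace]
      simp only [Matrix.diag_apply, Matrix.mul_apply, Matrix.transpose_apply]
      rw [Finset.sum_comm]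
      exact Finset.sum_congr rfl fun i _ => Finset.sum_congr rfl fun j _ => (sq (Cm i j)).symm
    rw [← h1, hCm1, Matrix.trace_one]
    simp [Nat.cast_sub hs'r]
  have ht1 : ∀ i, t i ≤ 1 := by
    intro i
    set P' := Cm * Cmᵀ with hP'
    have hP'symm : P'ᵀ = P' := by rw [hP', Matrix.transpose_mul, Matrix.transpose_transpose]
    have hP'P' : P' * P' = P' := by
      rw [hP']
      calc Cm * Cmᵀ * (Cm * Cmᵀ) = Cm * (Cmᵀ * Cm) * Cmᵀ := by simp only [Matrix.mul_assoc]
        _ = Cm * Cmᵀ := by rw [hCm1, Matrix.mul_one]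
    have hti : t i = P' i i := by
      simp only [hP', Matrix.mul_apply, Matrix.transpose_apply, ht, sq]
    have hsq : P' i i ^ 2 ≤ P' i i := by
      have h1 : P' i i = ∑ l, P' i l * P' l i := by
        conv_lhs => rw [← hP'P']
        rw [Matrix.mul_apply]
      have h2 : ∑ l, P' i l * P' l i = ∑ l, (P' i l) ^ 2 := by
        apply Finset.sum_congr rfl
        intro l _
        have hsym : P' i l = P' l i := Matrix.ext_iff.mpr hP'symm l i
        rw [← hsym]; ring
      have h3 : (P' i i) ^ 2 ≤ ∑ l, (P' i l) ^ 2 :=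
        Finset.single_le_sum (fun l _ => sq_nonneg (P' i l)) (Finset.mem_univ i)
      calc (P' i i) ^ 2 ≤ ∑ l, (P' i l) ^ 2 := h3
        _ = ∑ l, P' i l * P' l i := h2.symm
        _ = P' i i := h1.symm
    rw [hti]
    nlinarith [hsq]
  -- putting it together
  have key := tail_bound σ hσnn hσmono s' hs'r t ht0 ht1 htsum
  have htrZ : ∑ i, σ i ^ 2 * t i
      = Matrix.trace (((D - D₀) * X)ᵀ * ((D - D₀) * X)) := by
    rw [hMX, trace_orth_left _ _ hU, trace_sq_diag]
  have hcomp := trace_compress_le (D - D₀) X hXX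
  rw [frob_sq_eq_trace]
  calc ∑ i : Fin r, (if s' ≤ (i : ℕ) then σ i ^ 2 else 0) ≤ ∑ i, σ i ^ 2 * t i := key
    _ = Matrix.trace (((D - D₀) * X)ᵀ * ((D - D₀) * X)) := htrZ
    _ ≤ Matrix.trace ((D - D₀)ᵀ * (D - D₀)) := hcomp

/-- **Lemma 6.** Let `D = Ur Σr Vrᵀ` be a skinny SVD of a rank-`r` matrix `D` with
nonincreasing positive singular values `σ`, so that `C* = Vr Vrᵀ` is the nuclear-norm minimal
solution of `D = D C` (with skinny SVD `U_C = V_C = Vr`, `Σ_C = I`).  Let `α > 0` and let `k`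
minimize `k ↦ k + (α/2) ∑_{i ≥ k} σᵢ²` over `{0, …, r}`.  Then
`C₀* = U_C H_k(Σ_C) V_Cᵀ = V_k V_kᵀ` (where `V_k` consists of the first `k` columns of `Vr`)
is the `C₀`-component of an optimal solution of
`min ‖C₀‖_* + (α/2) ‖D − D₀‖_F²  s.t.  D₀ = D₀ C₀`. -/
theorem lrr_denoise_from_representation {m n r : ℕ}
    (D : Matrix (Fin m) (Fin n) ℝ)
    (Ur : Matrix (Fin m) (Fin r) ℝ) (Vr : Matrix (Fin n) (Fin r) ℝ)
    (σ : Fin r → ℝ) (hσpos : ∀ i, 0 < σ i)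
    (hσmono : ∀ i j : Fin r, i ≤ j → σ j ≤ σ i)
    (hU : Urᵀ * Ur = 1) (hV : Vrᵀ * Vr = 1)
    (hD : D = Ur * Matrix.diagonal σ * Vrᵀ)
    (hrank : D.rank = r)
    (α : ℝ) (hα : 0 < α)
    (k : ℕ) (hk : k ≤ r)
    (hkmin : ∀ k', k' ≤ r →
      (k : ℝ) + α / 2 * (∑ i : Fin r, if k ≤ (i : ℕ) then σ i ^ 2 else 0) ≤
        (k' : ℝ) + α / 2 * (∑ i : Fin r, if k' ≤ (i : ℕ) then σ i ^ 2 else 0)) :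
    ∃ D₀s : Matrix (Fin m) (Fin n) ℝ,
      D₀s = D₀s * (firstCols hk Vr * (firstCols hk Vr)ᵀ) ∧
      ∀ (D₀ : Matrix (Fin m) (Fin n) ℝ) (C₀ : Matrix (Fin n) (Fin n) ℝ), D₀ = D₀ * C₀ →
        nuclearNorm (firstCols hk Vr * (firstCols hk Vr)ᵀ) +
            α / 2 * frobNorm (D - D₀s) ^ 2 ≤
          nuclearNorm C₀ + α / 2 * frobNorm (D - D₀) ^ 2 := by
  have hσnn : ∀ i, 0 ≤ σ i := fun i => (hσpos i).le
  set Vk := firstCols hk Vr with hVkdef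
  have hVkV : Vkᵀ * Vk = 1 := by
    ext a b
    have h1 := Matrix.ext_iff.mpr hV (Fin.castLE hk a) (Fin.castLE hk b)
    simp only [Matrix.mul_apply, Matrix.transpose_apply] at h1
    simp only [Matrix.mul_apply, Matrix.transpose_apply, hVkdef, firstCols,
      Matrix.submatrix_apply, id_eq]
    rw [h1]
    simp [Matrix.one_apply, Fin.castLE_inj]
  set Cs := Vk * Vkᵀ with hCs
  have hCssymm : Csᵀ = Cs := by rw [hCs, Matrix.transpose_mul, Matrix.transpose_transpose]
  have hCsidem : Cs * Cs = Cs := by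
    rw [hCs]
    calc Vk * Vkᵀ * (Vk * Vkᵀ) = Vk * (Vkᵀ * Vk) * Vkᵀ := by simp only [Matrix.mul_assoc]
      _ = Vk * Vkᵀ := by rw [hVkV, Matrix.mul_one]
  have hnucCs : nuclearNorm Cs = (k : ℝ) := by
    rw [nuclearNorm_proj Cs hCssymm hCsidem, hCs, Matrix.trace_mul_comm, hVkV,
      Matrix.trace_one]
    simp
  set σ' : Fin r → ℝ := fun i => if (i : ℕ) < k then σ i else 0 with hσ'
  set D₀s := Ur * Matrix.diagonal σ' * Vrᵀ with hD₀s
  set J : Matrix (Fin r) (Fin k) ℝ :=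
    (1 : Matrix (Fin r) (Fin r) ℝ).submatrix id (Fin.castLE hk) with hJ
  have hJapp : ∀ (i : Fin r) (b : Fin k),
      J i b = if i = Fin.castLE hk b then (1:ℝ) else 0 := by
    intro i b
    simp [hJ, Matrix.one_apply]
  have hVkJ : Vk = Vr * J := by
    ext x b
    rw [Matrix.mul_apply, Finset.sum_eq_single (Fin.castLE hk b)]
    · rw [hJapp]
      simp [hVkdef, firstCols]
    · intro i _ hne
      rw [hJapp, if_neg hne, mul_zero]
    · intro h; exact absurd (Finset.mem_univ _) h
  have hJJ : J * Jᵀ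
      = Matrix.diagonal (fun i : Fin r => if (i : ℕ) < k then (1:ℝ) else 0) := by
    ext i j
    rw [Matrix.mul_apply]
    by_cases hik : (i : ℕ) < k
    · rw [Finset.sum_eq_single (⟨(i : ℕ), hik⟩ : Fin k)]
      · have hcast : Fin.castLE hk (⟨(i : ℕ), hik⟩ : Fin k) = i := rfl
        rw [Matrix.transpose_apply, hJapp, hJapp, hcast]
        by_cases hij : i = j
        · subst hij
          simp [Matrix.diagonal_apply, hik]
        · rw [if_pos rfl, if_neg (fun hc => hij (hc.symm)), Matrix.diagonal_apply,
            if_neg hij, one_mul]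
      · intro b _ hbne
        rw [hJapp, if_neg, zero_mul]
        intro hc
        apply hbne
        apply Fin.ext
        have : (i : ℕ) = ((Fin.castLE hk b : Fin r) : ℕ) := by rw [hc]
        simpa using this.symm
      · intro h; exact absurd (Finset.mem_univ _) h
    · rw [Finset.sum_eq_zero, Matrix.diagonal_apply]
      · rcases eq_or_ne i j with hij | hij
        · subst hij; simp [hik]
        · simp [hij]
      · intro b _
        rw [hJapp, if_neg, zero_mul]
        intro hc
        apply hik
        have : (i : ℕ) = ((Fin.castLE hk b : Fin r) : ℕ) := by rw [hc]
        simp at this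
        omega
  have hdd : Matrix.diagonal σ' *
      Matrix.diagonal (fun i : Fin r => if (i : ℕ) < k then (1:ℝ) else 0)
      = Matrix.diagonal σ' := by
    rw [Matrix.diagonal_mul_diagonal]
    apply congrArg Matrix.diagonal
    funext i
    by_cases h : (i : ℕ) < k <;> simp [hσ', h]
  have hfeas_s : D₀s = D₀s * Cs := by
    rw [hCs, hVkJ, hD₀s]
    have e : (Vr * J) * (Vr * J)ᵀ = Vr * ((J * Jᵀ) * Vrᵀ) := by
      rw [Matrix.transpose_mul]; simp only [Matrix.mul_assoc]
    rw [e, hJJ]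
    rw [show Ur * Matrix.diagonal σ' * Vrᵀ *
        (Vr * (Matrix.diagonal (fun i : Fin r => if (i : ℕ) < k then (1:ℝ) else 0) * Vrᵀ))
        = Ur * (Matrix.diagonal σ' * ((Vrᵀ * Vr) *
            (Matrix.diagonal (fun i : Fin r => if (i : ℕ) < k then (1:ℝ) else 0) * Vrᵀ)))
        by simp only [Matrix.mul_assoc], hV, Matrix.one_mul]
    rw [show Matrix.diagonal σ' *
        (Matrix.diagonal (fun i : Fin r => if (i : ℕ) < k then (1:ℝ) else 0) * Vrᵀ)
        = (Matrix.diagonal σ' *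
          Matrix.diagonal (fun i : Fin r => if (i : ℕ) < k then (1:ℝ) else 0)) * Vrᵀ
        from (Matrix.mul_assoc _ _ _).symm, hdd, Matrix.mul_assoc]
  set τ : Fin r → ℝ := fun i => if k ≤ (i : ℕ) then σ i else 0 with hτ
  have hsub : Matrix.diagonal σ - Matrix.diagonal σ' = Matrix.diagonal τ := by
    rw [Matrix.diagonal_sub]
    apply congrArg Matrix.diagonal
    funext i
    by_cases h : (i : ℕ) < k
    · simp [hσ', hτ, h, Nat.not_le.mpr h]
    · simp [hσ', hτ, h, Nat.not_lt.mp h]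
  have hdiff : D - D₀s = Ur * Matrix.diagonal τ * Vrᵀ := by
    rw [hD, hD₀s, ← Matrix.sub_mul, ← Matrix.mul_sub, hsub]
  have hrow : ∀ i : Fin r, ∑ j, (Vrᵀ) i j ^ 2 = 1 := by
    intro i
    have h1 := Matrix.ext_iff.mpr hV i i
    simp only [Matrix.mul_apply, Matrix.transpose_apply, Matrix.one_apply_eq] at h1
    rw [← h1]
    refine Finset.sum_congr rfl fun j _ => ?_
    rw [sq]
    rfl
  have hfrobDs : frobNorm (D - D₀s) ^ 2
      = ∑ i : Fin r, (if k ≤ (i : ℕ) then σ i ^ 2 else 0) := by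
    rw [frob_sq_eq_trace, hdiff,
      show Ur * Matrix.diagonal τ * Vrᵀ = Ur * (Matrix.diagonal τ * Vrᵀ)
        from Matrix.mul_assoc _ _ _,
      trace_orth_left _ _ hU, trace_sq_diag]
    apply Finset.sum_congr rfl
    intro i _
    rw [hrow i, mul_one]
    by_cases h : k ≤ (i : ℕ) <;> simp [hτ, h]
  refine ⟨D₀s, hfeas_s, ?_⟩
  intro D₀ C₀ hfeas0
  set s' := min D₀.rank r with hs'def
  have hs'r : s' ≤ r := min_le_right _ _
  have h1 : (s' : ℝ) ≤ nuclearNorm C₀ := nuclearNorm_ge_rank D₀ C₀ hfeas0 s' (min_le_left _ _)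
  have hrkmul : (D₀ * Vr).rank ≤ s' := by
    apply le_min (Matrix.rank_mul_le_left D₀ Vr)
    calc (D₀ * Vr).rank ≤ Vr.rank := Matrix.rank_mul_le_right D₀ Vr
      _ ≤ r := by simpa using Matrix.rank_le_card_width Vr
  have h2 := frob_ge_tail D D₀ Ur Vr σ hσnn hσmono hU hV hD s' hs'r hrkmul
  have hmin := hkmin s' hs'r
  have hα2 : (0:ℝ) ≤ α / 2 := by linarith
  have h3 := mul_le_mul_of_nonneg_left h2 hα2
  rw [hnucCs, hfrobDs]
  linarith [hmin, h1, h3]
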